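/- Let (X_n)_{n∈ω} and (Y_n)_{n∈ω} be towers of uniform spaces. A bijective function h : u-lim X_n → u-lim Y_n with h(⋃_n X_n) = ⋃_n Y_n is a homeomorphism provided that for every n ≥ 1 the restriction h|X_n : X_n → u-lim Y_n is continuous and regular at X_{n-1} ⊆ X_n, and the restriction h⁻¹|Y_n : Y_n → u-lim X_n is continuous and regular at Y_{n-1} ⊆ Y_n. -/

import Mathlib

open Set Filter Topology

universe u

/-- A tower of uniform spaces on the ambient set `X`: an increasing sequence
`S 0 ⊆ S 1 ⊆ ⋯` of subsets covering `X`, each `S n` carrying a uniformity which is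
the subspace uniformity inherited from `S (n+1)`. -/
structure UniformTower (X : Type u) where
  S : ℕ → Set X
  mono : Monotone S
  iUnion_eq : ⋃ n, S n = Set.univ
  u : (n : ℕ) → UniformSpace (S n)
  compat : ∀ n, u n = UniformSpace.comap (Set.inclusion (mono (Nat.le_succ n))) (u (n + 1))

namespace UniformTower

variable {X : Type u} (T : UniformTower X)

/-- The uniform direct limit: the strongest (finest) uniformity on `X` making all
the identity inclusions `S n → X` uniformly continuous. -/
noncomputable def dirLim : UniformSpace X :=
  sInf {u' : UniformSpace X |
    ∀ n, @UniformContinuous _ _ (T.u n) u' (Subtype.val : T.S n → X)}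

/-- The height `|x| = min {n : x ∈ S n}` of a point of `X`. -/
noncomputable def height (x : X) : ℕ := sInf {n | x ∈ T.S n}

lemma mem_S_height (x : X) : x ∈ T.S (T.height x) := by
  have hx : x ∈ ⋃ n, T.S n := T.iUnion_eq ▸ Set.mem_univ x
  rcases Set.mem_iUnion.mp hx with ⟨n, hn⟩
  exact Nat.sInf_mem ⟨n, show n ∈ {m | x ∈ T.S m} from hn⟩

/-- Given a sequence of pseudometrics `d n` on the stages `S n`, the distance
`d_{|x,y|}(x,y)` where `|x,y| = max (|x|, |y|)`. -/
noncomputable def chainD (d : (n : ℕ) → T.S n → T.S n → ℝ) (x y : X) : ℝ :=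
  d (max (T.height x) (T.height y))
    ⟨x, T.mono (le_max_left _ _) (T.mem_S_height x)⟩
    ⟨y, T.mono (le_max_right _ _) (T.mem_S_height y)⟩

/-- The limit pseudometric `lim d_n` of a sequence of pseudometrics:
`lim d_n (x,y) = inf { Σ_{i=1}^m d_{|x_{i-1},x_i|}(x_{i-1},x_i) : x = x_0, x_1, …, x_m = y }`. -/
noncomputable def limD (d : (n : ℕ) → T.S n → T.S n → ℝ) (x y : X) : ℝ :=
  sInf {r : ℝ | ∃ (m : ℕ) (c : ℕ → X), c 0 = x ∧ c m = y ∧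
    r = ∑ i ∈ Finset.range m, T.chainD d (c i) (c (i + 1))}

/-- A sequence of pseudometrics on the stages of the tower is monotone if
`d n ≤ d (n+1)` on `S n × S n`. -/
def MonotoneSeq (d : (n : ℕ) → T.S n → T.S n → ℝ) : Prop :=
  ∀ n (x y : T.S n),
    d n x y ≤ d (n + 1) (Set.inclusion (T.mono (Nat.le_succ n)) x)
      (Set.inclusion (T.mono (Nat.le_succ n)) y)

end UniformTower

/-- `d` is a pseudometric: it vanishes on the diagonal, is symmetric and satisfies
the triangle inequality. -/
def IsPseudometric {α : Type*} (d : α → α → ℝ) : Prop :=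
  (∀ x, d x x = 0) ∧ (∀ x y, d x y = d y x) ∧ (∀ x y z, d x z ≤ d x y + d y z)

/-- `d` is a uniform pseudometric on the uniform space `(α, u)`:
for every `ε > 0` the set `{d < ε}` is an entourage. -/
def IsUniformPseudometric {α : Type*} (u : UniformSpace α) (d : α → α → ℝ) : Prop :=
  IsPseudometric d ∧ ∀ ε : ℝ, 0 < ε → {p : α × α | d p.1 p.2 < ε} ∈ @uniformity α u

/-- A function `f : Z → Y` between uniform spaces is regular at a subset `A ⊆ Z` if for any
entourages `U` of `Y` and `V` of `Z` there is an entourage `W` of `Z` such that every point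
`x ∈ B(A;W)` admits a point `a ∈ A` with `(a,x) ∈ V` and `(f x, f a) ∈ U`. -/
def RegularAt {Z Y : Type*} (uZ : UniformSpace Z) (uY : UniformSpace Y)
    (f : Z → Y) (A : Set Z) : Prop :=
  ∀ U ∈ @uniformity Y uY, ∀ V ∈ @uniformity Z uZ, ∃ W ∈ @uniformity Z uZ,
    ∀ x : Z, (∃ a ∈ A, (x, a) ∈ W) → ∃ a ∈ A, (a, x) ∈ V ∧ (f x, f a) ∈ U

/-!
To see that `h` is continuous at a point `x₀` of some stage, which after shifting the tower is
`X₀`, one builds a uniform pseudometric on `u-lim Xₙ` whose small balls around `x₀` are mapped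
close to `h x₀`. Continuity of `h|X₀` at `x₀` gives a gauge `d₀` on `X₀` with this property;
regularity of `h|Xₙ₊₁` at `Xₙ` gives inductively gauges `dₙ₊₁ ≥ dₙ` on `Xₙ₊₁` such that every
`y ∈ Xₙ₊₁` that is `dₙ₊₁`-close to `z ∈ Xₙ` is `dₙ`-close, via `z`, to some `a ∈ Xₙ` with `h a`
close to `h y`. The pseudometric `lim dₙ` is uniform on the direct limit. A path of small
`lim dₙ`-length `r` from `x₀` to `y` is pushed down one stage at a time: by the triangle
inequality for `dₙ₊₁`, each excursion out of `Xₙ` is at least as long as the shortcut joining its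
ends, and a final excursion ending at `y` is replaced, using regularity, by a point `a ∈ Xₙ` with
`h a` within `r / 2ⁿ` of `h y`. These errors form a geometric series.
-/

open scoped SetRel Uniformity NNReal

section Frink

variable {α : Type*} (V : ℕ → SetRel α α)

noncomputable def preDistOfSeq (a b : α) : ℝ≥0 :=
  open Classical in if h : ∃ n, (a, b) ∉ V n then (1 / 2) ^ Nat.find h else 0

variable {V}

lemma preDistOfSeq_le_one (a b : α) : preDistOfSeq V a b ≤ 1 := by
  unfold preDistOfSeq
  split_ifs
  exacts [pow_le_one₀ (by positivity) (by norm_num), zero_le_one]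

lemma mem_of_preDistOfSeq_lt {n : ℕ} {a b : α} (h : preDistOfSeq V a b < (1 / 2) ^ n) :
    (a, b) ∈ V n := by
  classical
  unfold preDistOfSeq at h
  split_ifs at h with hex
  · have hlt : n < Nat.find hex :=
      (pow_lt_pow_iff_right_of_lt_one₀ (a := (1 / 2 : ℝ≥0)) (by norm_num) (by norm_num)).1 h
    simpa using Nat.find_min hex hlt
  · push Not at hex
    exact hex n

lemma preDistOfSeq_le_of_mem (hV : Antitone V) {n : ℕ} {a b : α} (h : (a, b) ∈ V n) :
    preDistOfSeq V a b ≤ (1 / 2) ^ (n + 1) := by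
  classical
  unfold preDistOfSeq
  split_ifs with hex
  · refine pow_le_pow_of_le_one (by norm_num) (by norm_num) ?_
    by_contra! hlt
    exact Nat.find_spec hex (hV (Nat.lt_succ_iff.1 hlt) h)
  · exact bot_le

lemma preDistOfSeq_self (hrefl : ∀ n a, (a, a) ∈ V n) (a : α) : preDistOfSeq V a a = 0 := by
  simp [preDistOfSeq, hrefl]

lemma preDistOfSeq_comm (hsymm : ∀ n, (V n).IsSymm) (a b : α) :
    preDistOfSeq V a b = preDistOfSeq V b a := by
  classical
  have hcomm : ∀ {n}, (a, b) ∉ V n ↔ (b, a) ∉ V n := not_congr (V _).comm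
  unfold preDistOfSeq
  split_ifs with hab hba hba
  · rw [Nat.find_congr' hcomm]
  · exact absurd (hab.imp fun _ => hcomm.1) hba
  · exact absurd (hba.imp fun _ => hcomm.2) hab
  · rfl

lemma preDistOfSeq_le_two_mul_max (hcomp : ∀ n, V (n + 1) ○ V (n + 1) ○ V (n + 1) ⊆ V n)
    (x₁ x₂ x₃ x₄ : α) :
    preDistOfSeq V x₁ x₄ ≤
      2 * max (preDistOfSeq V x₁ x₂) (max (preDistOfSeq V x₂ x₃) (preDistOfSeq V x₃ x₄)) := by
  classical
  by_cases hex : ∃ n, (x₁, x₄) ∉ V n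
  · rw [preDistOfSeq, dif_pos hex, ← div_le_iff₀' two_pos, ← mul_one_div (_ ^ _), ← pow_succ]
    by_contra! hlt
    simp only [max_lt_iff] at hlt
    exact Nat.find_spec hex (hcomp _ ⟨x₃, ⟨x₂, mem_of_preDistOfSeq_lt hlt.1,
      mem_of_preDistOfSeq_lt hlt.2.1⟩, mem_of_preDistOfSeq_lt hlt.2.2⟩)
  · rw [preDistOfSeq, dif_neg hex]
    exact bot_le

/-- Frink's metrization lemma. -/
theorem exists_pseudometric_of_comp3_subset (hrefl : ∀ n a, (a, a) ∈ V n)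
    (hsymm : ∀ n, (V n).IsSymm) (hcomp : ∀ n, V (n + 1) ○ V (n + 1) ○ V (n + 1) ⊆ V n) :
    ∃ ρ : α → α → ℝ, IsPseudometric ρ ∧ (∀ a b, ρ a b ≤ 1) ∧
      (∀ n a b, (a, b) ∈ V n → ρ a b ≤ (1 / 2) ^ (n + 1)) ∧
      ∀ n a b, ρ a b < (1 / 2) ^ (n + 1) → (a, b) ∈ V n := by
  have hanti : Antitone V := antitone_nat_of_succ_le fun n ⟨a, b⟩ h =>
    hcomp n ⟨b, ⟨a, hrefl _ a, h⟩, hrefl _ b⟩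
  let _ := PseudoMetricSpace.ofPreNNDist _ (preDistOfSeq_self hrefl) (preDistOfSeq_comm hsymm)
  have hle : ∀ a b, dist a b ≤ preDistOfSeq V a b :=
    PseudoMetricSpace.dist_ofPreNNDist_le _ _ _
  have hge : ∀ a b, (preDistOfSeq V a b : ℝ) ≤ 2 * dist a b :=
    PseudoMetricSpace.le_two_mul_dist_ofPreNNDist _ _ _ (preDistOfSeq_le_two_mul_max hcomp)
  refine ⟨dist, ⟨dist_self, dist_comm, dist_triangle⟩, fun a b => ?_, fun n a b h => ?_,
    fun n a b h => mem_of_preDistOfSeq_lt ?_⟩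
  · exact (hle a b).trans (by exact_mod_cast preDistOfSeq_le_one a b)
  · exact (hle a b).trans (by exact_mod_cast preDistOfSeq_le_of_mem hanti h)
  · rw [← NNReal.coe_lt_coe]
    push_cast
    linarith [hge a b, pow_succ (1 / 2 : ℝ) n]

end Frink

theorem exists_seq_of_forall_exists_succ {β : ℕ → Type*} (P : ∀ n, β n → Prop)
    (Q : ∀ n, β n → β (n + 1) → Prop) {b₀ : β 0} (h₀ : P 0 b₀)
    (hstep : ∀ n b, P n b → ∃ b', P (n + 1) b' ∧ Q n b b') :
    ∃ b : ∀ n, β n, b 0 = b₀ ∧ (∀ n, P n (b n)) ∧ ∀ n, Q n (b n) (b (n + 1)) := by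
  choose next hnextP hnextQ using hstep
  let seq : ∀ n, {b // P n b} := fun n =>
    Nat.rec ⟨b₀, h₀⟩ (fun n b => ⟨next n b.1 b.2, hnextP n b.1 b.2⟩) n
  exact ⟨fun n => (seq n).1, rfl, fun n => (seq n).2, fun n => hnextQ n (seq n).1 (seq n).2⟩

section UniformGauge

variable {α : Type*} [UniformSpace α]

theorem exists_comp3_seq_subset (E : ℕ → SetRel α α) (hE : ∀ n, E n ∈ 𝓤 α) :
    ∃ V : ℕ → SetRel α α, (∀ n, V n ∈ 𝓤 α) ∧ (∀ n, (V n).IsSymm) ∧ (∀ n, V n ⊆ E n) ∧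
      ∀ n, V (n + 1) ○ V (n + 1) ○ V (n + 1) ⊆ V n := by
  have hroot : ∀ s ∈ 𝓤 α, ∃ t ∈ 𝓤 α, SetRel.IsSymm t ∧ t ○ t ○ t ⊆ s ∧ t ⊆ s := fun s hs => by
    obtain ⟨t, ht, htsymm, hts⟩ := comp_comp_symm_mem_uniformity_sets hs
    have := isRefl_of_mem_uniformity ht
    exact ⟨t, ht, htsymm, hts, (SetRel.left_subset_comp.trans SetRel.left_subset_comp).trans hts⟩
  obtain ⟨V₀, hV₀, hV₀symm, -, hV₀E⟩ := hroot _ (hE 0)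
  obtain ⟨V, -, hV, hVcomp⟩ := exists_seq_of_forall_exists_succ
    (fun n V => V ∈ 𝓤 α ∧ SetRel.IsSymm V ∧ V ⊆ E n) (fun _ V V' => V' ○ V' ○ V' ⊆ V)
    ⟨hV₀, hV₀symm, hV₀E⟩ fun n V hV => by
      obtain ⟨t, ht, htsymm, htcomp, htsub⟩ := hroot _ (inter_mem hV.1 (hE (n + 1)))
      exact ⟨t, ⟨ht, htsymm, htsub.trans inter_subset_right⟩, htcomp.trans inter_subset_left⟩
  exact ⟨V, fun n => (hV n).1, fun n => (hV n).2.1, fun n => (hV n).2.2, hVcomp⟩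

theorem exists_isUniformPseudometric_ball_subset (E : ℕ → SetRel α α) (hE : ∀ n, E n ∈ 𝓤 α) :
    ∃ ρ : α → α → ℝ, IsUniformPseudometric ‹_› ρ ∧ (∀ a b, ρ a b ≤ 1) ∧
      ∀ n a b, ρ a b < (1 / 2) ^ (n + 1) → (a, b) ∈ E n := by
  obtain ⟨V, hV, hVsymm, hVE, hVcomp⟩ := exists_comp3_seq_subset E hE
  obtain ⟨ρ, hρ, hρ1, hρV, hVρ⟩ := exists_pseudometric_of_comp3_subset
    (fun n a => refl_mem_uniformity (hV n)) hVsymm hVcomp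
  refine ⟨ρ, ⟨hρ, fun ε hε => ?_⟩, hρ1, fun n a b h => hVE n (hVρ n a b h)⟩
  obtain ⟨n, hn⟩ := exists_pow_lt_of_lt_one hε (by norm_num : (1 / 2 : ℝ) < 1)
  refine mem_of_superset (hV n) fun p hp => (hρV n p.1 p.2 hp).trans_lt ?_
  exact (pow_le_pow_of_le_one (by norm_num) (by norm_num) n.le_succ).trans_lt hn

end UniformGauge

theorem RegularAt.exists_entourage {Z Y : Type*} {uZ : UniformSpace Z} {uY : UniformSpace Y}
    {f : Z → Y} {A : Set Z} (hf : RegularAt uZ uY f A) {U : SetRel Y Y}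
    (hU : U ∈ @uniformity Y uY) {V : SetRel Z Z} (hV : V ∈ @uniformity Z uZ) :
    ∃ W ∈ @uniformity Z uZ, W ⊆ V ∧
      ∀ z ∈ A, ∀ y, (z, y) ∈ W → ∃ a ∈ A, (z, a) ∈ V ∧ (f y, f a) ∈ U := by
  obtain ⟨V', hV', hV'symm, hV'V⟩ := comp_symm_mem_uniformity_sets hV
  obtain ⟨W, hW, hWreg⟩ := hf U hU V' hV'
  have := isRefl_of_mem_uniformity hV'
  refine ⟨V' ∩ Prod.swap ⁻¹' W, inter_mem hV' (symm_le_uniformity hW),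
    inter_subset_left.trans (SetRel.left_subset_comp.trans hV'V), fun z hz y hzy => ?_⟩
  obtain ⟨a, ha, hay, hfa⟩ := hWreg y ⟨z, hz, hzy.2⟩
  exact ⟨a, ha, hV'V ⟨y, hzy.1, SetRel.symm V' hay⟩, hfa⟩

lemma IsPseudometric.nonneg {α : Type*} {d : α → α → ℝ} (hd : IsPseudometric d) (a b : α) :
    0 ≤ d a b := by
  have := hd.2.2 a b a
  rw [hd.1, hd.2.1 b a] at this
  linarith

lemma IsUniformPseudometric.const_mul {α : Type*} {u : UniformSpace α} {ρ : α → α → ℝ}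
    (hρ : IsUniformPseudometric u ρ) {c : ℝ} (hc : 0 < c) :
    IsUniformPseudometric u fun a b => c * ρ a b := by
  obtain ⟨⟨hself, hcomm, htri⟩, hunif⟩ := hρ
  refine ⟨⟨fun a => by simp [hself], fun a b => by simp only [hcomm a b], fun a b c' => ?_⟩,
    fun ε hε => ?_⟩
  · rw [← mul_add]
    exact mul_le_mul_of_nonneg_left (htri a b c') hc.le
  · refine mem_of_superset (hunif (ε / c) (div_pos hε hc)) fun p hp => ?_
    simpa [lt_div_iff₀' hc] using hp

lemma le_four_mul_of_forall_lt_pow {s t : ℝ} (hs : 0 ≤ s) (ht : t ≤ 1)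
    (h : ∀ g : ℕ, s < (1 / 2) ^ (g + 1) → t < (1 / 2) ^ g) : t ≤ 4 * s := by
  by_contra! hlt
  obtain ⟨g, hgt, htg⟩ := exists_nat_pow_near_of_lt_one (by linarith) ht
    (by norm_num : (0 : ℝ) < 1 / 2) (by norm_num)
  have := h (g + 1) (by rw [pow_succ, pow_succ]; linarith)
  linarith

section PathCost

variable {α : Type*}

def pathCost (δ : α → α → ℝ) : α → List α → α → ℝ
  | x, [], y => δ x y
  | x, z :: l, y => δ x z + pathCost δ z l y

lemma pathCost_append_singleton (δ : α → α → ℝ) (x : α) (l : List α) (b y : α) :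
    pathCost δ x (l ++ [b]) y = pathCost δ x l b + δ b y := by
  induction l generalizing x with
  | nil => rfl
  | cons z l ih => simp only [List.cons_append, pathCost, ih, add_assoc]

lemma pathCost_nonneg {δ : α → α → ℝ} (hδ : ∀ a b, 0 ≤ δ a b) (x : α) (l : List α) (y : α) :
    0 ≤ pathCost δ x l y := by
  induction l generalizing x with
  | nil => exact hδ x y
  | cons z l ih => exact add_nonneg (hδ x z) (ih z)

lemma le_pathCost {δ : α → α → ℝ} {s : Set α}
    (htri : ∀ a ∈ s, ∀ b ∈ s, ∀ c ∈ s, δ a c ≤ δ a b + δ b c) {x y : α} (hx : x ∈ s)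
    (hy : y ∈ s) {l : List α} (hl : ∀ z ∈ l, z ∈ s) : δ x y ≤ pathCost δ x l y := by
  induction l generalizing x with
  | nil => exact le_rfl
  | cons z l ih =>
    have hz := hl z List.mem_cons_self
    exact (htri x hx z hz y hy).trans
      (add_le_add_right (ih hz fun w hw => hl w (List.mem_cons_of_mem _ hw)) _)

lemma coe_sum_zipWith_toNNReal {δ : α → α → ℝ} (hδ : ∀ a b, 0 ≤ δ a b) (x : α) (l : List α)
    (y : α) :
    (((x :: l).zipWith (fun a b => (δ a b).toNNReal) (l ++ [y])).sum : ℝ) = pathCost δ x l y := by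
  induction l generalizing x with
  | nil => simp [pathCost, hδ]
  | cons z l ih => simp [pathCost, ← ih, hδ]

end PathCost

namespace UniformTower

variable {X : Type u}

section Stages

variable (T : UniformTower X)

lemma height_le {x : X} {n : ℕ} (hx : x ∈ T.S n) : T.height x ≤ n :=
  Nat.sInf_le hx

lemma height_eq_succ {x : X} {n : ℕ} (hx : x ∈ T.S (n + 1)) (hxn : x ∉ T.S n) :
    T.height x = n + 1 :=
  (T.height_le hx).antisymm <| Nat.succ_le_of_lt <| lt_of_not_ge fun h =>
    hxn (T.mono h (T.mem_S_height x))

lemma exists_forall_mem_S (l : List X) : ∃ N, ∀ x ∈ l, x ∈ T.S N := by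
  induction l with
  | nil => exact ⟨0, by simp⟩
  | cons x l ih =>
    obtain ⟨N, hN⟩ := ih
    refine ⟨max (T.height x) N, ?_⟩
    simp only [List.mem_cons, forall_eq_or_imp]
    exact ⟨T.mono (le_max_left _ _) (T.mem_S_height x),
      fun y hy => T.mono (le_max_right _ _) (hN y hy)⟩

lemma uniformContinuous_inclusion {m n : ℕ} (h : m ≤ n) :
    @UniformContinuous _ _ (T.u m) (T.u n) (Set.inclusion (T.mono h)) := by
  induction n, h using Nat.le_induction with
  | base => exact @uniformContinuous_id _ (T.u m)
  | succ n hmn ih =>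
    have hstep : @UniformContinuous _ _ (T.u n) (T.u (n + 1))
        (Set.inclusion (T.mono n.le_succ)) := by
      rw [T.compat n]
      exact @uniformContinuous_comap _ _ _ (T.u (n + 1))
    exact @UniformContinuous.comp _ _ _ (T.u m) (T.u n) (T.u (n + 1)) _ _ hstep ih

def shift (k : ℕ) : UniformTower X where
  S n := T.S (k + n)
  mono _ _ h := T.mono (Nat.add_le_add_left h k)
  iUnion_eq := eq_univ_of_forall fun x =>
    mem_iUnion.2 ⟨T.height x, T.mono (Nat.le_add_left _ _) (T.mem_S_height x)⟩
  u n := T.u (k + n)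
  compat n := T.compat (k + n)

lemma dirLim_shift (k : ℕ) : (T.shift k).dirLim = T.dirLim := by
  refine congrArg sInf (Set.ext fun v => ⟨fun hv n => ?_, fun hv n => hv (k + n)⟩)
  exact @UniformContinuous.comp _ _ _ (T.u n) (T.u (k + n)) v _ _ (hv n)
    (T.uniformContinuous_inclusion (Nat.le_add_left n k))

end Stages

section ChainDist

variable {T : UniformTower X} {d : (n : ℕ) → T.S n → T.S n → ℝ}

lemma chainD_eq {x y : X} {n : ℕ} (h : max (T.height x) (T.height y) = n) (hx : x ∈ T.S n)
    (hy : y ∈ T.S n) : T.chainD d x y = d n ⟨x, hx⟩ ⟨y, hy⟩ := by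
  subst h
  rfl

lemma chainD_eq_of_mem_zero {x y : X} (hx : x ∈ T.S 0) (hy : y ∈ T.S 0) :
    T.chainD d x y = d 0 ⟨x, hx⟩ ⟨y, hy⟩ :=
  chainD_eq (by simp [Nat.le_zero.1 (T.height_le hx), Nat.le_zero.1 (T.height_le hy)]) hx hy

lemma chainD_eq_succ {x y : X} {n : ℕ} (hx : x ∈ T.S (n + 1)) (hy : y ∈ T.S (n + 1))
    (hn : x ∉ T.S n ∨ y ∉ T.S n) : T.chainD d x y = d (n + 1) ⟨x, hx⟩ ⟨y, hy⟩ := by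
  refine chainD_eq ?_ hx hy
  rcases hn with hn | hn
  · rw [T.height_eq_succ hx hn, max_eq_left (T.height_le hy)]
  · rw [T.height_eq_succ hy hn, max_eq_right (T.height_le hx)]

lemma chainD_self (hd : ∀ n, IsPseudometric (d n)) (x : X) : T.chainD d x x = 0 :=
  (hd _).1 _

lemma chainD_comm (hd : ∀ n, IsPseudometric (d n)) (x y : X) :
    T.chainD d x y = T.chainD d y x := by
  rw [chainD_eq (max_comm _ _) (T.mono (le_max_right _ _) (T.mem_S_height x))
    (T.mono (le_max_left _ _) (T.mem_S_height y)), (hd _).2.1]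
  rfl

lemma chainD_nonneg (hd : ∀ n, IsPseudometric (d n)) (x y : X) : 0 ≤ T.chainD d x y :=
  (hd _).nonneg _ _

lemma MonotoneSeq.le_of_le (hd : T.MonotoneSeq d) {m n : ℕ} (hmn : m ≤ n) (a b : T.S m) :
    d m a b ≤ d n (Set.inclusion (T.mono hmn) a) (Set.inclusion (T.mono hmn) b) := by
  induction n, hmn using Nat.le_induction with
  | base => exact le_rfl
  | succ n hmn ih => exact ih.trans (hd n _ _)

lemma chainD_le (hd : T.MonotoneSeq d) {x y : X} {n : ℕ} (hx : x ∈ T.S n) (hy : y ∈ T.S n) :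
    T.chainD d x y ≤ d n ⟨x, hx⟩ ⟨y, hy⟩ :=
  hd.le_of_le (max_le (T.height_le hx) (T.height_le hy)) _ _

end ChainDist

section LimDist

variable (T : UniformTower X) {Y : Type*}

/-- The pseudometric `lim d_n` of the paper (`limD`), realised as a pseudometric space
structure. -/
@[reducible] noncomputable def limPseudoMetricSpace (d : (n : ℕ) → T.S n → T.S n → ℝ)
    (hd : ∀ n, IsPseudometric (d n)) : PseudoMetricSpace X :=
  PseudoMetricSpace.ofPreNNDist (fun x y => (T.chainD d x y).toNNReal)
    (fun x => by simp [chainD_self hd]) (fun x y => by rw [chainD_comm hd])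

lemma dirLim_le_limPseudoMetricSpace {d : (n : ℕ) → T.S n → T.S n → ℝ}
    (hd : ∀ n, IsUniformPseudometric (T.u n) (d n)) (hmono : T.MonotoneSeq d) :
    T.dirLim ≤ (T.limPseudoMetricSpace d fun n => (hd n).1).toUniformSpace := by
  refine sInf_le fun n => (@Metric.uniformity_basis_dist X (T.limPseudoMetricSpace d _))
    |>.tendsto_right_iff.2 fun ε hε => mem_of_superset ((hd n).2 ε hε) fun q hq => ?_
  calc (T.limPseudoMetricSpace d fun n => (hd n).1).dist q.1 q.2
      ≤ (T.chainD d q.1 q.2).toNNReal := PseudoMetricSpace.dist_ofPreNNDist_le _ _ _ _ _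
    _ = T.chainD d q.1 q.2 := Real.coe_toNNReal _ (chainD_nonneg (fun n => (hd n).1) _ _)
    _ ≤ d n q.1 q.2 := chainD_le hmono q.1.2 q.2.2
    _ < ε := hq

/-- Regularity of `f` at each `S n ⊆ S (n + 1)`, measured by the gauges `d n` on the stages and
`dY` on `Y`. -/
def RegularGauge (f : X → Y) (dY : Y → Y → ℝ) (d : (n : ℕ) → T.S n → T.S n → ℝ) : Prop :=
  ∀ n (z : T.S n) (y : T.S (n + 1)) (r : ℝ), 0 < r → r ≤ 1 →
    d (n + 1) (Set.inclusion (T.mono n.le_succ) z) y < r →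
      ∃ a : T.S n, d n z a < r ∧ dY (f y) (f a) < r / 2 ^ n

end LimDist

section Descent

variable {T : UniformTower X} {d : (n : ℕ) → T.S n → T.S n → ℝ} {Y : Type*} {f : X → Y}
  {dY : Y → Y → ℝ}

/-- Shortcuts the excursions out of `S n` of a path in `S (n + 1)`: `z` is its last point in
`S n`, and the excursion from `z` to `y` is remembered only through its `d (n + 1)`-length. -/
lemma exists_lower_path (hd : ∀ n, IsPseudometric (d n)) (hmono : T.MonotoneSeq d) {n : ℕ}
    {x₀ : X} (hx₀ : x₀ ∈ T.S n) (l : List X) (hl : ∀ w ∈ l, w ∈ T.S (n + 1))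
    (y : T.S (n + 1)) :
    ∃ (z : T.S n) (l' : List X), (∀ w ∈ l', w ∈ T.S n) ∧ (y.1 ∈ T.S n → z.1 = y.1) ∧
      pathCost (T.chainD d) x₀ l' z + d (n + 1) (Set.inclusion (T.mono n.le_succ) z) y ≤
        pathCost (T.chainD d) x₀ l y := by
  induction l using List.reverseRecOn generalizing y with
  | nil =>
    by_cases hy : y.1 ∈ T.S n
    · refine ⟨⟨y, hy⟩, [], by simp, fun _ => rfl, ?_⟩
      simp [pathCost, (hd (n + 1)).1 y]
    · refine ⟨⟨x₀, hx₀⟩, [], by simp, fun h => absurd h hy, ?_⟩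
      rw [pathCost, pathCost, chainD_self hd, zero_add,
        chainD_eq_succ (d := d) (T.mono n.le_succ hx₀) y.2 (Or.inr hy)]
  | append_singleton l b ih =>
    have hb : b ∈ T.S (n + 1) := hl b (by simp)
    obtain ⟨z, l', hl', hzb, hcost⟩ := ih (fun w hw => hl w (by simp [hw])) ⟨b, hb⟩
    have hzb_nonneg := (hd (n + 1)).nonneg (Set.inclusion (T.mono n.le_succ) z) ⟨b, hb⟩
    rw [pathCost_append_singleton]
    by_cases hy : y.1 ∈ T.S n
    · refine ⟨⟨y, hy⟩, l' ++ [z.1], by simpa [or_imp, forall_and, z.2] using hl', fun _ => rfl, ?_⟩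
      suffices T.chainD d z y ≤ d (n + 1) (Set.inclusion (T.mono n.le_succ) z) ⟨b, hb⟩ +
          T.chainD d b y by
        simp only [pathCost_append_singleton, (hd (n + 1)).1]
        linarith
      by_cases hbn : b ∈ T.S n
      · rw [hzb hbn]
        linarith
      · calc T.chainD d z y ≤ d n z ⟨y, hy⟩ := chainD_le hmono z.2 hy
          _ ≤ d (n + 1) (Set.inclusion (T.mono n.le_succ) z) y := hmono n _ _
          _ ≤ _ := (hd (n + 1)).2.2 _ ⟨b, hb⟩ _
          _ = _ := by rw [chainD_eq_succ (d := d) hb y.2 (Or.inl hbn)]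
    · refine ⟨z, l', hl', fun h => absurd h hy, ?_⟩
      have := (hd (n + 1)).2.2 (Set.inclusion (T.mono n.le_succ) z) ⟨b, hb⟩ y
      rw [← chainD_eq_succ (d := d) hb y.2 (Or.inr hy)] at this
      linarith

lemma exists_lower_path_of_regularGauge (hd : ∀ n, IsPseudometric (d n))
    (hmono : T.MonotoneSeq d) (hreg : T.RegularGauge f dY d) {n : ℕ} {x₀ : X}
    (hx₀ : x₀ ∈ T.S n) {l : List X} (hl : ∀ w ∈ l, w ∈ T.S (n + 1)) {y : X}
    (hy : y ∈ T.S (n + 1)) {B : ℝ} (hB : B ≤ 1) (hcost : pathCost (T.chainD d) x₀ l y < B) :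
    ∃ (a : T.S n) (l' : List X), (∀ w ∈ l', w ∈ T.S n) ∧
      pathCost (T.chainD d) x₀ l' a < B ∧ dY (f y) (f a) < B / 2 ^ n := by
  obtain ⟨z, l', hl', -, hz⟩ := exists_lower_path hd hmono hx₀ l hl ⟨y, hy⟩
  have hc := pathCost_nonneg (chainD_nonneg hd) x₀ l' z
  have hzy := (hd (n + 1)).nonneg (Set.inclusion (T.mono n.le_succ) z) ⟨y, hy⟩
  obtain ⟨a, hza, hfa⟩ := hreg n z ⟨y, hy⟩ (B - pathCost (T.chainD d) x₀ l' z)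
    (by linarith) (by linarith) (by linarith)
  have hza' : T.chainD d z a ≤ d n z a := chainD_le hmono z.2 a.2
  refine ⟨a, l' ++ [z.1], by simpa [or_imp, forall_and, z.2] using hl', ?_, hfa.trans_le ?_⟩
  · rw [pathCost_append_singleton]
    linarith
  · gcongr
    linarith

lemma exists_path_in_S_zero (hd : ∀ n, IsPseudometric (d n)) (hmono : T.MonotoneSeq d)
    (hdY : IsPseudometric dY) (hreg : T.RegularGauge f dY d) {x₀ : X} (hx₀ : x₀ ∈ T.S 0)
    {B : ℝ} (hB : B ≤ 1) (N : ℕ) {l : List X} (hl : ∀ w ∈ l, w ∈ T.S N) {y : X}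
    (hy : y ∈ T.S N) (hcost : pathCost (T.chainD d) x₀ l y < B) :
    ∃ (a : T.S 0) (l' : List X), (∀ w ∈ l', w ∈ T.S 0) ∧
      pathCost (T.chainD d) x₀ l' a < B ∧ dY (f y) (f a) ≤ 2 * B * (1 - (1 / 2) ^ N) := by
  induction N generalizing l y with
  | zero => exact ⟨⟨y, hy⟩, l, hl, hcost, by simp [hdY.1]⟩
  | succ N ih =>
    obtain ⟨a', l', hl', hcost', hfa'⟩ := exists_lower_path_of_regularGauge hd hmono hreg
      (T.mono (Nat.zero_le N) hx₀) hl hy hB hcost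
    obtain ⟨a, l'', hl'', hcost'', hfa⟩ := ih hl' a'.2 hcost'
    refine ⟨a, l'', hl'', hcost'', ?_⟩
    calc dY (f y) (f a) ≤ dY (f y) (f a') + dY (f a') (f a) := hdY.2.2 _ _ _
      _ ≤ B / 2 ^ N + 2 * B * (1 - (1 / 2) ^ N) := add_le_add hfa'.le hfa
      _ = 2 * B * (1 - (1 / 2) ^ (N + 1)) := by simp only [one_div, inv_pow, pow_succ]; ring

lemma exists_S_zero_close_of_dist_lt (hd : ∀ n, IsPseudometric (d n)) (hmono : T.MonotoneSeq d)
    (hdY : IsPseudometric dY) (hreg : T.RegularGauge f dY d) {x₀ : X} (hx₀ : x₀ ∈ T.S 0)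
    {B : ℝ} (hB : B ≤ 1) {y : X} (hy : (T.limPseudoMetricSpace d hd).dist x₀ y < B) :
    ∃ a : T.S 0, d 0 ⟨x₀, hx₀⟩ a < B ∧ dY (f y) (f a) ≤ 2 * B := by
  obtain ⟨l, hl⟩ := exists_lt_of_ciInf_lt (Real.lt_toNNReal_iff_coe_lt.2 hy)
  have hcost : pathCost (T.chainD d) x₀ l y < B := by
    rw [← coe_sum_zipWith_toNNReal (chainD_nonneg hd)]
    exact Real.lt_toNNReal_iff_coe_lt.1 hl
  obtain ⟨N, hN⟩ := T.exists_forall_mem_S (y :: l)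
  obtain ⟨a, l', hl', hcost', hfa⟩ := exists_path_in_S_zero hd hmono hdY hreg hx₀ hB N
    (fun w hw => hN w (List.mem_cons_of_mem _ hw)) (hN y List.mem_cons_self) hcost
  have htri : ∀ x ∈ T.S 0, ∀ z ∈ T.S 0, ∀ w ∈ T.S 0,
      T.chainD d x w ≤ T.chainD d x z + T.chainD d z w := fun x hx z hz w hw => by
    simp only [chainD_eq_of_mem_zero hx hz, chainD_eq_of_mem_zero hz hw,
      chainD_eq_of_mem_zero hx hw]
    exact (hd 0).2.2 _ _ _
  refine ⟨a, ?_, hfa.trans ?_⟩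
  · calc d 0 ⟨x₀, hx₀⟩ a = T.chainD d x₀ a := (chainD_eq_of_mem_zero hx₀ a.2).symm
      _ ≤ pathCost (T.chainD d) x₀ l' a := le_pathCost htri hx₀ a.2 hl'
      _ < B := hcost'
  · have : 0 ≤ B := ((pathCost_nonneg (chainD_nonneg hd) _ _ _).trans_lt hcost).le
    nlinarith [pow_pos (by norm_num : (0 : ℝ) < 1 / 2) N]

end Descent

section Construction

variable {T : UniformTower X} {Y : Type*} [UniformSpace Y] {f : X → Y} {dY : Y → Y → ℝ}

lemma exists_gauge_succ {n : ℕ}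
    (hf : RegularAt (T.u (n + 1)) ‹_› (fun z : T.S (n + 1) => f z) {z | z.1 ∈ T.S n})
    (hdY : IsUniformPseudometric ‹_› dY) {σ : T.S n → T.S n → ℝ}
    (hσ : IsUniformPseudometric (T.u n) σ) :
    ∃ τ : T.S (n + 1) → T.S (n + 1) → ℝ, IsUniformPseudometric (T.u (n + 1)) τ ∧
      (∀ a b, τ a b ≤ 1) ∧
      (∀ g (a b : T.S n), τ (Set.inclusion (T.mono n.le_succ) a)
        (Set.inclusion (T.mono n.le_succ) b) < (1 / 2) ^ (g + 1) → σ a b < (1 / 2) ^ g) ∧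
      ∀ g (z : T.S n) (y : T.S (n + 1)), τ (Set.inclusion (T.mono n.le_succ) z) y <
        (1 / 2) ^ (g + 1) → ∃ a : T.S n, σ z a < (1 / 2) ^ g ∧ dY (f y) (f a) < (1 / 2) ^ g := by
  let _ := T.u (n + 1)
  have hE : ∀ g : ℕ, ∃ W ∈ 𝓤 (T.S (n + 1)),
      (∀ a b : T.S n, (Set.inclusion (T.mono n.le_succ) a, Set.inclusion (T.mono n.le_succ) b)
        ∈ W → σ a b < (1 / 2) ^ g) ∧
      ∀ (z : T.S n) y, (Set.inclusion (T.mono n.le_succ) z, y) ∈ W →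
        ∃ a : T.S n, σ z a < (1 / 2) ^ g ∧ dY (f y) (f a) < (1 / 2) ^ g := fun g => by
    have hσg := hσ.2 _ (pow_pos (by norm_num : (0 : ℝ) < 1 / 2) g)
    rw [T.compat n, uniformity_comap] at hσg
    obtain ⟨V, hV, hVσ⟩ := hσg
    obtain ⟨W, hW, hWV, hWreg⟩ :=
      hf.exists_entourage (hdY.2 _ (pow_pos (by norm_num : (0 : ℝ) < 1 / 2) g)) hV
    refine ⟨W, hW, fun a b hab => @hVσ (a, b) (hWV hab), fun z y hzy => ?_⟩
    obtain ⟨a, ha, hza, hfa⟩ := hWreg _ z.2 y hzy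
    exact ⟨⟨a, ha⟩, @hVσ (z, ⟨a, ha⟩) hza, hfa⟩
  choose W hW hWσ hWreg using hE
  obtain ⟨τ, hτ, hτ1, hτW⟩ := exists_isUniformPseudometric_ball_subset W hW
  exact ⟨τ, hτ, hτ1, fun g a b h => hWσ g a b (hτW g _ _ h),
    fun g z y h => hWreg g z y (hτW g _ _ h)⟩

lemma exists_regularGauge
    (hreg : ∀ n, RegularAt (T.u (n + 1)) ‹_› (fun z : T.S (n + 1) => f z) {z | z.1 ∈ T.S n})
    (hdY : IsUniformPseudometric ‹_› dY) {ρ₀ : T.S 0 → T.S 0 → ℝ}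
    (hρ₀ : IsUniformPseudometric (T.u 0) ρ₀) (hρ₀1 : ∀ a b, ρ₀ a b ≤ 1) :
    ∃ d : (n : ℕ) → T.S n → T.S n → ℝ, (∀ n, IsUniformPseudometric (T.u n) (d n)) ∧
      T.MonotoneSeq d ∧ T.RegularGauge f dY d ∧ d 0 = ρ₀ := by
  obtain ⟨ρ, hρ0, hρ, hρsucc⟩ := exists_seq_of_forall_exists_succ (β := fun n => T.S n → T.S n → ℝ)
    (fun n σ => IsUniformPseudometric (T.u n) σ ∧ ∀ a b, σ a b ≤ 1)
    (fun n σ τ => (∀ g (a b : T.S n), τ (Set.inclusion (T.mono n.le_succ) a)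
        (Set.inclusion (T.mono n.le_succ) b) < (1 / 2) ^ (g + 1) → σ a b < (1 / 2) ^ g) ∧
      ∀ g (z : T.S n) (y : T.S (n + 1)), τ (Set.inclusion (T.mono n.le_succ) z) y <
        (1 / 2) ^ (g + 1) → ∃ a : T.S n, σ z a < (1 / 2) ^ g ∧ dY (f y) (f a) < (1 / 2) ^ g)
    ⟨hρ₀, hρ₀1⟩ fun n σ hσ => by
      obtain ⟨τ, hτ, hτ1, htrace, hτreg⟩ := exists_gauge_succ (hreg n) hdY hσ.1
      exact ⟨τ, ⟨hτ, hτ1⟩, htrace, hτreg⟩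
  -- the weights `4 ^ n` turn the thresholds of `exists_gauge_succ` into linear bounds
  refine ⟨fun n a b => 4 ^ n * ρ n a b, fun n => (hρ n).1.const_mul (by positivity),
    fun n a b => ?_, fun n z y r hr hr1 hzy => ?_, by simp [hρ0]⟩
  · have := le_four_mul_of_forall_lt_pow ((hρ (n + 1)).1.1.nonneg _ _) ((hρ n).2 a b)
      ((hρsucc n).1 · a b)
    simp only [pow_succ]
    nlinarith [pow_pos (by norm_num : (0 : ℝ) < 4) n]
  · have h4 : (0 : ℝ) < 4 ^ n := by positivity
    obtain ⟨g, hgx, hxg⟩ := exists_nat_pow_near_of_lt_one (div_pos hr h4)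
      ((div_le_one h4).2 (hr1.trans (one_le_pow₀ (by norm_num)))) (by norm_num : (0 : ℝ) < 1 / 2)
      (by norm_num)
    rw [lt_div_iff₀ h4] at hgx
    rw [div_le_iff₀ h4] at hxg
    have hzy' : 4 ^ n * 4 * ρ (n + 1) (Set.inclusion (T.mono n.le_succ) z) y < r := by
      simpa only [pow_succ] using hzy
    obtain ⟨a, hza, hfa⟩ := (hρsucc n).2 (g + 1) z y (by
      simp only [pow_succ] at hxg ⊢
      nlinarith)
    refine ⟨a, by nlinarith [mul_lt_mul_of_pos_left hza h4], ?_⟩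
    calc dY (f y) (f a) < r / 4 ^ n := by rw [lt_div_iff₀ h4]; nlinarith
      _ ≤ r / 2 ^ n := div_le_div_of_nonneg_left hr.le (by positivity)
          (pow_le_pow_left₀ (by norm_num) (by norm_num) n)

end Construction

variable (T : UniformTower X) {Y : Type*} [UniformSpace Y] {f : X → Y}

theorem continuousAt_of_regularAt {x₀ : X} (hx₀ : x₀ ∈ T.S 0)
    (hcont : @ContinuousAt _ _ (T.u 0).toTopologicalSpace _ (fun z : T.S 0 => f z) ⟨x₀, hx₀⟩)
    (hreg : ∀ n, RegularAt (T.u (n + 1)) ‹_› (fun z : T.S (n + 1) => f z) {z | z.1 ∈ T.S n}) :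
    @ContinuousAt _ _ T.dirLim.toTopologicalSpace _ f x₀ := by
  intro U hU
  obtain ⟨V, hV, hVU⟩ := UniformSpace.mem_nhds_iff.1 hU
  obtain ⟨dY, hdY, -, hdYV⟩ := exists_isUniformPseudometric_ball_subset (fun _ => V) fun _ => hV
  let _ := T.u 0
  obtain ⟨E, hE, hEf⟩ := UniformSpace.mem_nhds_iff.1
    (hcont.preimage_mem_nhds (UniformSpace.ball_mem_nhds (f x₀) (hdY.2 (1 / 4) (by norm_num))))
  obtain ⟨ρ₀, hρ₀, hρ₀1, hρ₀E⟩ := exists_isUniformPseudometric_ball_subset (fun _ => E) fun _ => hE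
  obtain ⟨d, hd, hmono, hgauge, rfl⟩ := exists_regularGauge hreg hdY hρ₀ hρ₀1
  refine mem_map.2 <| mem_of_superset (nhds_mono (UniformSpace.toTopologicalSpace_mono
    (T.dirLim_le_limPseudoMetricSpace hd hmono)) (@Metric.ball_mem_nhds X
      (T.limPseudoMetricSpace d _) x₀ (1 / 8) (by norm_num))) fun y hy => hVU ?_
  obtain ⟨a, hx₀a, hya⟩ := exists_S_zero_close_of_dist_lt (fun n => (hd n).1) hmono hdY.1 hgauge hx₀
    (B := 1 / 8) (by norm_num) ((@Metric.mem_ball' X (T.limPseudoMetricSpace d _) _ _ _).1 hy)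
  have hx₀a' : dY (f x₀) (f a) < 1 / 4 := hEf (hρ₀E 0 _ _ (by linarith))
  refine hdYV 0 _ _ ((hdY.1.2.2 _ (f a) _).trans_lt ?_)
  rw [hdY.1.2.1 (f a)]
  linarith

theorem continuous_of_regularAt
    (hcont : ∀ m, @Continuous _ _ (T.u (m + 1)).toTopologicalSpace _
      (fun z : T.S (m + 1) => f z))
    (hreg : ∀ m, RegularAt (T.u (m + 1)) ‹_› (fun z : T.S (m + 1) => f z) {z | z.1 ∈ T.S m}) :
    @Continuous _ _ T.dirLim.toTopologicalSpace _ f := by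
  refine (@continuous_iff_continuousAt _ _ T.dirLim.toTopologicalSpace _ _).2 fun x => ?_
  -- `f` is continuous on the bottom stage `S (height x + 1)` of the shifted tower
  rw [← T.dirLim_shift (T.height x + 1)]
  exact (T.shift (T.height x + 1)).continuousAt_of_regularAt
    (T.mono (T.height x).le_succ (T.mem_S_height x))
    (@Continuous.continuousAt _ _ (T.u _).toTopologicalSpace _ _ _ (hcont _))
    fun n => hreg (T.height x + 1 + n)

end UniformTower

theorem statement5_general {X Y : Type u} (TX : UniformTower X) (TY : UniformTower Y)
    (h : X → Y) (g : Y → X)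
    (hgh : Function.LeftInverse g h) (hhg : Function.RightInverse g h)
    (hcont : ∀ m : ℕ, @Continuous _ _ (TX.u (m + 1)).toTopologicalSpace
      TY.dirLim.toTopologicalSpace (fun z : TX.S (m + 1) => h z.val))
    (hreg : ∀ m : ℕ, RegularAt (TX.u (m + 1)) TY.dirLim (fun z : TX.S (m + 1) => h z.val)
      {z : TX.S (m + 1) | z.val ∈ TX.S m})
    (hcont' : ∀ m : ℕ, @Continuous _ _ (TY.u (m + 1)).toTopologicalSpace
      TX.dirLim.toTopologicalSpace (fun z : TY.S (m + 1) => g z.val))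
    (hreg' : ∀ m : ℕ, RegularAt (TY.u (m + 1)) TX.dirLim (fun z : TY.S (m + 1) => g z.val)
      {z : TY.S (m + 1) | z.val ∈ TY.S m}) :
    @IsHomeomorph X Y TX.dirLim.toTopologicalSpace TY.dirLim.toTopologicalSpace h := by
  let _ := TX.dirLim
  let _ := TY.dirLim
  exact isHomeomorph_iff_exists_inverse.2 ⟨TX.continuous_of_regularAt hcont hreg, g, hgh, hhg,
    TY.continuous_of_regularAt hcont' hreg'⟩

/-- A bijective function `h : u-lim X_n → u-lim Y_n` between the uniform direct limits of two
towers of uniform spaces, with inverse `g`, is a homeomorphism provided that for every `n ≥ 1`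
the restriction `h|X_n : X_n → u-lim Y_n` is continuous and regular at `X_{n-1} ⊆ X_n` and the
restriction `g|Y_n = h⁻¹|Y_n : Y_n → u-lim X_n` is continuous and regular at `Y_{n-1} ⊆ Y_n`
(here stated with `n = m + 1`). -/
theorem statement5 {X Y : Type u} (TX : UniformTower X) (TY : UniformTower Y)
    (h : X → Y) (g : Y → X)
    (hbij : Function.Bijective h)
    (hgh : Function.LeftInverse g h) (hhg : Function.RightInverse g h)
    (hcont : ∀ m : ℕ, @Continuous _ _ (TX.u (m + 1)).toTopologicalSpace
      TY.dirLim.toTopologicalSpace (fun z : TX.S (m + 1) => h z.val))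
    (hreg : ∀ m : ℕ, RegularAt (TX.u (m + 1)) TY.dirLim (fun z : TX.S (m + 1) => h z.val)
      {z : TX.S (m + 1) | z.val ∈ TX.S m})
    (hcont' : ∀ m : ℕ, @Continuous _ _ (TY.u (m + 1)).toTopologicalSpace
      TX.dirLim.toTopologicalSpace (fun z : TY.S (m + 1) => g z.val))
    (hreg' : ∀ m : ℕ, RegularAt (TY.u (m + 1)) TX.dirLim (fun z : TY.S (m + 1) => g z.val)
      {z : TY.S (m + 1) | z.val ∈ TY.S m}) :
    @IsHomeomorph X Y TX.dirLim.toTopologicalSpace TY.dirLim.toTopologicalSpace h :=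
  statement5_general TX TY h g hgh hhg hcont hreg hcont' hreg'
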